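/- arXiv:1701.07540 — 5 statements merged into one kernel-verified Lean document; each statement's English description precedes it below -/
import Mathlib

section
/- Let x_1, x_2 : Z_L → {0,1} and set u_i = 1 − 2·x_i (valued in {−1,1}). Suppose that for all orders m < n and all m-tuples k in V^m, A_k(x_1) = A_k(x_2). Then sum over k in V^n of (A_k(u_1) − A_k(u_2))^2 = 2^{2n} · sum over k in V^n of (A_k(x_1) − A_k(x_2))^2. -/
noncomputable def autocorr {L : ℕ} [NeZero L] {d : ℕ} (k : Fin d → ZMod L)
    (x : ZMod L → ℝ) : ℝ :=
  (1 / (L : ℝ)) * ∑ s : ZMod L, ∏ i, x (k i + s)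

lemma autocorr_expand {L : ℕ} [NeZero L] {n : ℕ} (k : Fin n → ZMod L)
    (x : ZMod L → ℝ) :
    autocorr k (fun j => 1 - 2 * x j)
      = ∑ S ∈ (Finset.univ : Finset (Fin n)).powerset,
          (-2:ℝ)^S.card * ((1/(L:ℝ)) * ∑ s : ZMod L, ∏ i ∈ S, x (k i + s)) := by
  unfold autocorr
  have hprod : ∀ s : ZMod L, (∏ i : Fin n, (1 - 2 * x (k i + s)))
      = ∑ S ∈ (Finset.univ : Finset (Fin n)).powerset,
          (-2:ℝ)^S.card * ∏ i ∈ S, x (k i + s) := by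
    intro s
    have h := Finset.prod_add (fun i : Fin n => (-2:ℝ) * x (k i + s))
      (fun _ : Fin n => (1:ℝ)) Finset.univ
    have h1 : (∏ i : Fin n, ((-2:ℝ) * x (k i + s) + 1))
        = ∏ i : Fin n, (1 - 2 * x (k i + s)) := by
      apply Finset.prod_congr rfl; intro i _; ring
    rw [h1] at h
    rw [h]
    apply Finset.sum_congr rfl
    intro S _
    rw [Finset.prod_const_one, mul_one, Finset.prod_mul_distrib, Finset.prod_const]
  rw [Finset.sum_congr rfl (fun s _ => hprod s)]
  simp only [Finset.mul_sum]
  rw [Finset.sum_comm]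
  apply Finset.sum_congr rfl
  intro S _
  apply Finset.sum_congr rfl
  intro s _
  ring

theorem sum_sq_diff_autocorr_pm_eq {L : ℕ} [NeZero L] (V : Finset (ZMod L)) (n : ℕ)
    (x₁ x₂ : ZMod L → ℝ)
    (hx₁ : ∀ j, x₁ j = 0 ∨ x₁ j = 1) (hx₂ : ∀ j, x₂ j = 0 ∨ x₂ j = 1)
    (hlow : ∀ m : ℕ, m < n → ∀ k : Fin m → V,
      autocorr (fun i => (k i : ZMod L)) x₁ = autocorr (fun i => (k i : ZMod L)) x₂) :
    ∑ k : Fin n → V,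
        (autocorr (fun i => (k i : ZMod L)) (fun j => 1 - 2 * x₁ j)
          - autocorr (fun i => (k i : ZMod L)) (fun j => 1 - 2 * x₂ j)) ^ 2
      = 2 ^ (2 * n) *
        ∑ k : Fin n → V,
          (autocorr (fun i => (k i : ZMod L)) x₁
            - autocorr (fun i => (k i : ZMod L)) x₂) ^ 2 := by
  have key : ∀ k : Fin n → V,
      autocorr (fun i => (k i : ZMod L)) (fun j => 1 - 2 * x₁ j)
        - autocorr (fun i => (k i : ZMod L)) (fun j => 1 - 2 * x₂ j)
      = (-2 : ℝ)^n * (autocorr (fun i => (k i : ZMod L)) x₁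
          - autocorr (fun i => (k i : ZMod L)) x₂) := by
    intro k
    rw [autocorr_expand, autocorr_expand, ← Finset.sum_sub_distrib]
    rw [Finset.sum_eq_single (Finset.univ : Finset (Fin n))]
    · simp only [Finset.card_univ, Fintype.card_fin]
      rw [← mul_sub]
      rfl
    · intro S _ hS
      -- lower-order terms cancel
      have hcard : S.card < n := by
        have : S.card ≤ n := by simpa using Finset.card_le_card (Finset.subset_univ S)
        rcases lt_or_eq_of_le this with h | h
        · exact h
        · exact absurd (Finset.eq_univ_of_card S (by simpa using h)) hS
      have heq : ∀ x : ZMod L → ℝ,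
          (1/(L:ℝ)) * ∑ s : ZMod L, ∏ i ∈ S, x ((k i : ZMod L) + s)
          = autocorr (fun j : Fin S.card => ((k (S.equivFin.symm j).1 : ZMod L))) x := by
        intro x
        unfold autocorr
        congr 1
        apply Finset.sum_congr rfl
        intro s _
        rw [← Finset.prod_attach S (fun i => x ((k i : ZMod L) + s))]
        exact (Equiv.prod_comp S.equivFin.symm
          (fun i : {i // i ∈ S} => x ((k i.1 : ZMod L) + s))).symm
      rw [heq, heq, hlow S.card hcard (fun j => k (S.equivFin.symm j).1), sub_self]
    · simp
  calc ∑ k : Fin n → V,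
        (autocorr (fun i => (k i : ZMod L)) (fun j => 1 - 2 * x₁ j)
          - autocorr (fun i => (k i : ZMod L)) (fun j => 1 - 2 * x₂ j)) ^ 2
      = ∑ k : Fin n → V, 2^(2*n) *
          (autocorr (fun i => (k i : ZMod L)) x₁
            - autocorr (fun i => (k i : ZMod L)) x₂) ^ 2 := by
        apply Finset.sum_congr rfl
        intro k _
        rw [key k, mul_pow, ← pow_mul, mul_comm n 2]
        norm_num
    _ = _ := by rw [← Finset.mul_sum]
end

section
/- Let L ≥ 6 and define x_1 = (1,1,0,1,0,...,0) and x_2 = (1,0,1,1,0,...,0) in {0,1}^L (each with L−4 trailing zeros). Then A_k(x_1) = A_k(x_2) for all k in Z_L^d with d ≤ 2, but there exists k in Z_L^3 with A_k(x_1) ≠ A_k(x_2); i.e., the minimal autocorrelation order distinguishing x_1 and x_2 is 3. -/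
/-- `x₁ = (1,1,0,1,0,…,0)`, with ones at positions `0,1,3` (0-indexed). -/
noncomputable def xOne (L : ℕ) : ZMod L → ℝ :=
  fun j => if j = 0 ∨ j = 1 ∨ j = 3 then 1 else 0

/-- `x₂ = (1,0,1,1,0,…,0)`, with ones at positions `0,2,3` (0-indexed). -/
noncomputable def xTwo (L : ℕ) : ZMod L → ℝ :=
  fun j => if j = 0 ∨ j = 2 ∨ j = 3 then 1 else 0

lemma autocorr_shift {L : ℕ} [NeZero L] {d : ℕ} (k : Fin d → ZMod L) (c : ZMod L)
    (x : ZMod L → ℝ) : autocorr (fun i => k i + c) x = autocorr k x := by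
  unfold autocorr
  congr 1
  apply Fintype.sum_equiv (Equiv.addLeft c)
  intro s
  apply Finset.prod_congr rfl
  intro i _
  simp only [Equiv.coe_addLeft]
  ring_nf

lemma autocorr_reflect {L : ℕ} [NeZero L] {d : ℕ} (k : Fin d → ZMod L) (a : ZMod L)
    (x : ZMod L → ℝ) : autocorr k (fun j => x (a - j)) = autocorr (fun i => - k i) x := by
  unfold autocorr
  congr 1
  apply Fintype.sum_equiv (Equiv.subLeft a)
  intro s
  apply Finset.prod_congr rfl
  intro i _
  simp only [Equiv.subLeft_apply]
  ring_nf

lemma xTwo_eq {L : ℕ} : xTwo L = fun j => xOne L (3 - j) := by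
  funext j
  unfold xOne xTwo
  apply if_congr _ rfl rfl
  constructor
  · rintro (rfl | rfl | rfl)
    · right; right; ring
    · right; left; ring
    · left; ring
  · rintro (h | h | h)
    · right; right; linear_combination -h
    · right; left; linear_combination -h
    · left; linear_combination -h

lemma autocorr_pair_symm {L : ℕ} [NeZero L] (t : ZMod L) (x : ZMod L → ℝ) :
    autocorr ![0, t] x = autocorr ![t, 0] x := by
  unfold autocorr
  congr 1
  apply Finset.sum_congr rfl
  intro s _
  rw [Fin.prod_univ_two, Fin.prod_univ_two]
  simp [mul_comm]

lemma zmod_ne {L : ℕ} [NeZero L] (a b : ℕ) (ha : a < L) (hb : b < L) (h : a ≠ b) :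
    (a : ZMod L) ≠ (b : ZMod L) := by
  intro hc
  apply h
  have := congrArg ZMod.val hc
  rwa [ZMod.val_natCast_of_lt ha, ZMod.val_natCast_of_lt hb] at this

example {L : ℕ} [NeZero L] (hL : 6 ≤ L) : (1 : ZMod L) ≠ 3 := by
  have := zmod_ne (L := L) 1 3 (by omega) (by omega) (by omega)
  simpa using this

example {L : ℕ} [NeZero L] (hL : 6 ≤ L) : (4 : ZMod L) ≠ 2 := by
  have := zmod_ne (L := L) 4 2 (by omega) (by omega) (by omega)
  simpa using this

example {L : ℕ} [NeZero L] (hL : 6 ≤ L) : (5 : ZMod L) ≠ 0 := by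
  have := zmod_ne (L := L) 5 0 (by omega) (by omega) (by omega)
  simpa using this

theorem min_distinguishing_order_three {L : ℕ} [NeZero L] (hL : 6 ≤ L) :
    (∀ d : ℕ, d ≤ 2 → ∀ k : Fin d → ZMod L, autocorr k (xOne L) = autocorr k (xTwo L)) ∧
      ∃ k : Fin 3 → ZMod L, autocorr k (xOne L) ≠ autocorr k (xTwo L) := by
  have key : ∀ {d : ℕ} (k : Fin d → ZMod L),
      autocorr k (xTwo L) = autocorr (fun i => - k i) (xOne L) := by
    intro d k
    rw [xTwo_eq]
    exact autocorr_reflect k 3 (xOne L)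
  constructor
  · intro d hd k
    interval_cases d
    · -- d = 0
      simp [autocorr]
    · -- d = 1
      rw [key]
      have h1 : k = fun i : Fin 1 => (fun _ : Fin 1 => (0 : ZMod L)) i + k 0 := by
        funext i
        have : i = 0 := Subsingleton.elim _ _
        rw [this, zero_add]
      have h2 : (fun i => - k i) = fun i : Fin 1 => (fun _ : Fin 1 => (0 : ZMod L)) i + (- k 0) := by
        funext i
        have : i = 0 := Subsingleton.elim _ _
        rw [this, zero_add]
      have e1 : autocorr k (xOne L) = autocorr (fun _ : Fin 1 => (0 : ZMod L)) (xOne L) := by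
        conv_lhs => rw [h1]
        exact autocorr_shift _ _ _
      have e2 : autocorr (fun i => - k i) (xOne L)
          = autocorr (fun _ : Fin 1 => (0 : ZMod L)) (xOne L) := by
        conv_lhs => rw [h2]
        exact autocorr_shift _ _ _
      rw [e1, e2]
    · -- d = 2
      rw [key]
      set t : ZMod L := k 1 - k 0 with ht
      have h1 : k = fun i : Fin 2 => ![0, t] i + k 0 := by
        funext i
        fin_cases i <;> simp [ht] <;> ring
      have h2 : (fun i => - k i) = fun i : Fin 2 => ![t, 0] i + (- k 1) := by
        funext i
        fin_cases i <;> simp [ht] <;> ring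
      have e1 : autocorr k (xOne L) = autocorr ![0, t] (xOne L) := by
        conv_lhs => rw [h1]
        exact autocorr_shift _ _ _
      have e2 : autocorr (fun i => - k i) (xOne L) = autocorr ![t, 0] (xOne L) := by
        conv_lhs => rw [h2]
        exact autocorr_shift _ _ _
      rw [e1, e2, autocorr_pair_symm]
  · refine ⟨![0, 1, 3], ?_⟩
    have hL' : (0 : ℝ) < L := by positivity
    -- numeric inequalities in ZMod L
    have ne10 : (1 : ZMod L) ≠ 0 := by
      have := zmod_ne (L := L) 1 0 (by omega) (by omega) (by omega); simpa using this
    have ne12 : (1 : ZMod L) ≠ 2 := by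
      have := zmod_ne (L := L) 1 2 (by omega) (by omega) (by omega); simpa using this
    have ne13 : (1 : ZMod L) ≠ 3 := by
      have := zmod_ne (L := L) 1 3 (by omega) (by omega) (by omega); simpa using this
    have ne50 : (5 : ZMod L) ≠ 0 := by
      have := zmod_ne (L := L) 5 0 (by omega) (by omega) (by omega); simpa using this
    have ne52 : (5 : ZMod L) ≠ 2 := by
      have := zmod_ne (L := L) 5 2 (by omega) (by omega) (by omega); simpa using this
    have ne53 : (5 : ZMod L) ≠ 3 := by
      have := zmod_ne (L := L) 5 3 (by omega) (by omega) (by omega); simpa using this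
    have ne40 : (4 : ZMod L) ≠ 0 := by
      have := zmod_ne (L := L) 4 0 (by omega) (by omega) (by omega); simpa using this
    have ne42 : (4 : ZMod L) ≠ 2 := by
      have := zmod_ne (L := L) 4 2 (by omega) (by omega) (by omega); simpa using this
    have ne43 : (4 : ZMod L) ≠ 3 := by
      have := zmod_ne (L := L) 4 3 (by omega) (by omega) (by omega); simpa using this
    have hx2 : autocorr ![0, 1, 3] (xTwo L) = 0 := by
      unfold autocorr
      rw [Finset.sum_eq_zero, mul_zero]
      intro s _
      rw [Fin.prod_univ_three]
      simp only [Matrix.cons_val_zero, Matrix.cons_val_one, Matrix.head_cons,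
        Matrix.cons_val_two, Matrix.tail_cons, zero_add]
      by_cases hs0 : s = 0
      · subst hs0
        have : xTwo L (1 + 0) = 0 := by
          simp [xTwo, ne10, ne12, ne13]
        rw [this]; ring
      by_cases hs2 : s = 2
      · subst hs2
        have h5 : (3 + 2 : ZMod L) = 5 := by norm_num
        have : xTwo L (3 + 2) = 0 := by
          rw [h5]; simp [xTwo, ne50, ne52, ne53]
        rw [this]; ring
      by_cases hs3 : s = 3
      · subst hs3
        have h4 : (1 + 3 : ZMod L) = 4 := by norm_num
        have : xTwo L (1 + 3) = 0 := by
          rw [h4]; simp [xTwo, ne40, ne42, ne43]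
        rw [this]; ring
      · have : xTwo L s = 0 := by simp [xTwo, hs0, hs2, hs3]
        rw [this]; ring
    have hx1 : 0 < autocorr ![0, 1, 3] (xOne L) := by
      unfold autocorr
      have hnonneg : ∀ s ∈ Finset.univ, (0:ℝ) ≤ ∏ i, xOne L (![0, 1, 3] i + s) := by
        intro s _
        apply Finset.prod_nonneg
        intro i _
        unfold xOne
        split <;> norm_num
      have hterm : (1:ℝ) = ∏ i, xOne L (![0, 1, 3] i + (0 : ZMod L)) := by
        rw [Fin.prod_univ_three]
        simp only [Matrix.cons_val_zero, Matrix.cons_val_one, Matrix.head_cons,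
          Matrix.cons_val_two, Matrix.tail_cons, add_zero]
        simp [xOne]
      have hsum : (1:ℝ) ≤ ∑ s : ZMod L, ∏ i, xOne L (![0, 1, 3] i + s) := by
        rw [hterm]
        exact Finset.single_le_sum hnonneg (Finset.mem_univ 0)
      have : (0:ℝ) < 1 / L := by positivity
      nlinarith
    rw [hx2]
    exact ne_of_gt hx1
end

section
/- Let L be prime and x : Z_L → {0,1} a signal that is not identically 0 and not identically 1. Then all Fourier coefficients of x are nonzero: for every j in Z_L, r_j := (1/√L) · sum_{s=1}^{L} x(s) ω^{−js} ≠ 0, where ω = e^{2πi/L}. -/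
open Complex

private lemma sum_zmod_val_helper {M : Type*} [AddCommMonoid M] (L : ℕ) [NeZero L]
    (f : ℕ → M) : ∑ s : ZMod L, f s.val = ∑ i ∈ Finset.range L, f i := by
  rw [← Fin.sum_univ_eq_sum_range]
  refine Fintype.sum_bijective (fun s : ZMod L => (⟨s.val, ZMod.val_lt s⟩ : Fin L)) ?_ _ _
    (fun s => rfl)
  rw [Fintype.bijective_iff_injective_and_card]
  refine ⟨fun s t h => ZMod.val_injective L (congrArg Fin.val h), by simp [ZMod.card]⟩

theorem fourier_coeffs_nonzero {L : ℕ} [NeZero L] (hL : L.Prime) (x : ZMod L → ℝ)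
    (hx : ∀ j, x j = 0 ∨ x j = 1)
    (hx0 : ¬(∀ j, x j = 0)) (hx1 : ¬(∀ j, x j = 1)) (j : ZMod L) :
    (1 / (Real.sqrt L : ℂ)) *
        ∑ s : ZMod L,
          (x s : ℂ) * Complex.exp (2 * Real.pi * I / L) ^ (-((j.val : ℤ) * (s.val : ℤ)))
      ≠ 0 := by
  have hLpos : 0 < L := Nat.pos_of_ne_zero (NeZero.ne L)
  have hL2 : 1 < L := hL.one_lt
  -- prefactor nonzero
  have hpre : (1 / (Real.sqrt L : ℂ)) ≠ 0 := by
    have : Real.sqrt L ≠ 0 := by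
      positivity
    simpa using this
  set ω : ℂ := Complex.exp (2 * Real.pi * I / L) with hω
  have hωprim : IsPrimitiveRoot ω L := Complex.isPrimitiveRoot_exp L (NeZero.ne L)
  set ζ : ℂ := ω ^ (-(j.val : ℤ)) with hζ
  have hterm : ∀ s : ZMod L, ω ^ (-((j.val : ℤ) * (s.val : ℤ))) = ζ ^ s.val := by
    intro s
    rw [hζ, ← zpow_natCast (ω ^ (-(j.val : ℤ))), ← zpow_mul]
    ring_nf
  rw [mul_ne_zero_iff]
  refine ⟨hpre, ?_⟩
  simp_rw [hterm]
  -- now need: ∑ s, x s * ζ ^ s.val ≠ 0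
  intro hS
  by_cases hj : j = 0
  · -- j = 0 : ζ = 1, sum of x s is positive
    subst hj
    simp only [ZMod.val_zero, Nat.cast_zero, neg_zero, zpow_zero, hζ] at hS
    simp only [one_pow, mul_one] at hS
    have hS' : ∑ s : ZMod L, x s = 0 := by
      have := congrArg Complex.re hS
      simpa using this
    apply hx0
    intro t
    have hnn : ∀ s : ZMod L, 0 ≤ x s := by
      intro s; rcases hx s with h | h <;> simp [h]
    have := (Finset.sum_eq_zero_iff_of_nonneg (fun s _ => hnn s)).mp hS' t (Finset.mem_univ t)
    exact this
  · -- j ≠ 0 : ζ primitive L-th root of unity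
    have hjval : j.val ≠ 0 := fun h => hj (by
      have := (ZMod.val_eq_zero j).mp h; exact this)
    have hcop : (j.val).Coprime L := by
      rw [Nat.coprime_comm]
      exact (hL.coprime_iff_not_dvd).mpr
        (Nat.not_dvd_of_pos_of_lt (Nat.pos_of_ne_zero hjval) (ZMod.val_lt j))
    have hζprim : IsPrimitiveRoot ζ L := by
      have h1 : IsPrimitiveRoot (ω ^ j.val) L := hωprim.pow_of_coprime _ hcop
      have : ζ = (ω ^ j.val)⁻¹ := by
        rw [hζ, zpow_neg, zpow_natCast]
      rw [this]
      exact h1.inv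
    -- geometric sum is zero
    have hgeom : ∑ s : ZMod L, ζ ^ s.val = 0 := by
      rw [sum_zmod_val_helper L (fun i => ζ ^ i)]
      exact hζprim.geom_sum_eq_zero hL2
    -- integer coefficients
    set a : ZMod L → ℚ := fun s => if x s = 1 then 1 else 0 with ha
    have hax : ∀ s, ((a s : ℚ) : ℂ) = (x s : ℂ) := by
      intro s; rcases hx s with h | h <;> simp [ha, h]
    -- the polynomial
    set Q : Polynomial ℚ := ∑ s : ZMod L, Polynomial.C (a s - a 0) * Polynomial.X ^ s.val
      with hQ
    have haev : Polynomial.aeval ζ Q = 0 := by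
      rw [hQ, map_sum]
      simp only [map_mul, map_pow, Polynomial.aeval_C, Polynomial.aeval_X, map_sub]
      have : ∀ s : ZMod L, ((algebraMap ℚ ℂ) (a s) - (algebraMap ℚ ℂ) (a 0)) * ζ ^ s.val
          = (x s : ℂ) * ζ ^ s.val - (algebraMap ℚ ℂ) (a 0) * ζ ^ s.val := by
        intro s
        rw [sub_mul]
        congr 2
        simpa using hax s
      simp_rw [this]
      rw [Finset.sum_sub_distrib, hS, ← Finset.mul_sum, hgeom, mul_zero, sub_zero]
    -- coefficients of Q
    have hcoeff : ∀ t : ZMod L, Q.coeff t.val = a t - a 0 := by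
      intro t
      rw [hQ, Polynomial.finset_sum_coeff]
      rw [Finset.sum_eq_single t]
      · simp [Polynomial.coeff_C_mul, Polynomial.coeff_X_pow, sub_mul, Polynomial.coeff_sub]
      · intro s _ hst
        have : s.val ≠ t.val := fun h => hst (ZMod.val_injective L h)
        simp [Polynomial.coeff_C_mul, Polynomial.coeff_X_pow, sub_mul, Polynomial.coeff_sub, this, this.symm]
      · intro h; exact absurd (Finset.mem_univ t) h
    -- Q = 0
    have hQ0 : Q = 0 := by
      by_contra hQne
      have hmin : Polynomial.cyclotomic L ℚ = minpoly ℚ ζ :=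
        Polynomial.cyclotomic_eq_minpoly_rat hζprim hLpos
      have hdvd : Polynomial.cyclotomic L ℚ ∣ Q := by
        rw [hmin]; exact minpoly.dvd ℚ ζ haev
      obtain ⟨g, hg⟩ := hdvd
      have hcycne : Polynomial.cyclotomic L ℚ ≠ 0 := Polynomial.cyclotomic_ne_zero L ℚ
      have hgne : g ≠ 0 := by
        intro h; rw [h, mul_zero] at hg; exact hQne hg
      have hdegQ : Q.natDegree ≤ L - 1 := by
        rw [hQ]
        apply Polynomial.natDegree_sum_le_of_forall_le
        intro s _
        calc (Polynomial.C (a s - a 0) * Polynomial.X ^ s.val).natDegree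
            ≤ s.val := by
              apply le_trans (Polynomial.natDegree_mul_le)
              simp [Polynomial.natDegree_X_pow]
          _ ≤ L - 1 := Nat.le_sub_one_of_lt (ZMod.val_lt s)
      have hdegcyc : (Polynomial.cyclotomic L ℚ).natDegree = L - 1 := by
        rw [Polynomial.natDegree_cyclotomic, Nat.totient_prime hL]
      have hdegmul : Q.natDegree = (L - 1) + g.natDegree := by
        rw [hg, Polynomial.natDegree_mul hcycne hgne, hdegcyc]
      have hgdeg : g.natDegree = 0 := by omega
      have hgC : g = Polynomial.C (g.coeff 0) := Polynomial.eq_C_of_natDegree_eq_zero hgdeg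
      have hQc0 : Q.coeff 0 = 0 := by
        have := hcoeff 0
        simpa using this
      have : Fact (Nat.Prime L) := ⟨hL⟩
      have hcycc0 : (Polynomial.cyclotomic L ℚ).coeff 0 = 1 := by
        rw [Polynomial.cyclotomic_prime]
        simp [Polynomial.finset_sum_coeff, Polynomial.coeff_X_pow,
          Finset.sum_ite_eq' (Finset.range L) 0, hLpos]
      have : g.coeff 0 = 0 := by
        have h0 := congrArg (fun p => Polynomial.coeff p 0) hg
        simp only [Polynomial.mul_coeff_zero, hcycc0, one_mul, hQc0] at h0
        exact h0.symm
      rw [this, map_zero] at hgC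
      exact hgne hgC
    -- all coefficients vanish, so x is constant
    have hconst : ∀ t : ZMod L, x t = x 0 := by
      intro t
      have := hcoeff t
      rw [hQ0, Polynomial.coeff_zero] at this
      have hat : a t = a 0 := by linarith [this]
      rcases hx t with ht | ht <;> rcases hx 0 with h0 | h0 <;>
        simp [ha, ht, h0] at hat ⊢
    rcases hx 0 with h0 | h0
    · exact hx0 (fun t => (hconst t).trans h0)
    · exact hx1 (fun t => (hconst t).trans h0)
end

section
/- Let x_1, x_2 : Z_L → {0,1} with equal first-order autocorrelations, i.e., A_0(x_1) = A_0(x_2). If there is a unique (up to permutations of entries and uniform shifts) triple k* in Z_L^3 with A_{k*}(x_1) ≠ A_{k*}(x_2), and the orbit of k* under the action of S_3 × Z_L (permutations and shifts) has size 6L, then sum over all k in Z_L^3 of (A_k(x_1) − A_k(x_2)) = 6L · (A_{k*}(x_1) − A_{k*}(x_2)) ≠ 0. Combined with the identity sum_{k in Z_L^3} A_k(x) = L^3 A_0(x)^3, this sum must also equal L^3(A_0(x_1)^3 − A_0(x_2)^3) = 0, a contradiction; hence no such pair (x_1,x_2) exists, i.e., B_3(x_1,x_2) := sum_k (A_k(x_1)−A_k(x_2))^2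 cannot equal 6/L when A_0(x_1)=A_0(x_2). -/
section aux
variable {L : ℕ} [NeZero L]

private lemma ac3_eq (x : ZMod L → ℝ) (a b c : ZMod L) :
    autocorr ![a,b,c] x = (1/(L:ℝ)) * ∑ s : ZMod L, x (a+s) * x (b+s) * x (c+s) := by
  simp [autocorr, Fin.prod_univ_three]

private lemma ac1_eq (x : ZMod L → ℝ) :
    autocorr (fun _ : Fin 1 => (0 : ZMod L)) x = (1/(L:ℝ)) * ∑ s : ZMod L, x s := by
  simp [autocorr]

private lemma shift3 (x : ZMod L → ℝ) (a b c t : ZMod L) :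
    autocorr ![a+t,b+t,c+t] x = autocorr ![a,b,c] x := by
  rw [ac3_eq, ac3_eq]
  congr 1
  exact Fintype.sum_equiv (Equiv.addLeft t) _ _ (fun s => by
    simp only [Equiv.coe_addLeft]
    rw [show a + t + s = a + (t + s) by ring, show b + t + s = b + (t + s) by ring,
      show c + t + s = c + (t + s) by ring])

private lemma perm12 (x : ZMod L → ℝ) (a b c : ZMod L) :
    autocorr ![a,b,c] x = autocorr ![b,a,c] x := by
  rw [ac3_eq, ac3_eq]
  exact congrArg _ (Finset.sum_congr rfl fun s _ => by ring)

private lemma perm23 (x : ZMod L → ℝ) (a b c : ZMod L) :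
    autocorr ![a,b,c] x = autocorr ![a,c,b] x := by
  rw [ac3_eq, ac3_eq]
  exact congrArg _ (Finset.sum_congr rfl fun s _ => by ring)

private lemma acha (x : ZMod L → ℝ) (u v : ZMod L) :
    autocorr ![0, -u, v-u] x = autocorr ![0, u, v] x := by
  have h1 := shift3 x u 0 v (-u)
  have e : (![u + -u, 0 + -u, v + -u] : Fin 3 → ZMod L) = ![0, -u, v - u] := by
    ext i
    fin_cases i <;> simp <;> ring
  rw [e] at h1
  rw [h1, ← perm12]

private def e3X : (ZMod L × ZMod L × ZMod L) ≃ (Fin 3 → ZMod L) where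
  toFun q := ![q.1, q.2.1, q.2.2]
  invFun k := (k 0, k 1, k 2)
  left_inv q := by simp
  right_inv k := by
    ext i
    fin_cases i <;> simp

private lemma sum_tripleX (F : (Fin 3 → ZMod L) → ℝ) :
    ∑ k : Fin 3 → ZMod L, F k = ∑ a : ZMod L, ∑ b : ZMod L, ∑ c : ZMod L, F ![a,b,c] := by
  rw [← Fintype.sum_equiv (e3X (L := L)) (fun q => F ![q.1, q.2.1, q.2.2]) F (fun q => rfl)]
  rw [Fintype.sum_prod_type]
  exact Finset.sum_congr rfl fun a _ => Fintype.sum_prod_type _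

private lemma master (F : (Fin 3 → ZMod L) → ℝ)
    (hF : ∀ a b c t : ZMod L, F ![a+t, b+t, c+t] = F ![a,b,c]) :
    ∑ k : Fin 3 → ZMod L, F k = L * ∑ p : ZMod L × ZMod L, F ![0, p.1, p.2] := by
  rw [sum_tripleX]
  have h1 : ∀ a : ZMod L, ∑ b : ZMod L, ∑ c : ZMod L, F ![a,b,c]
      = ∑ p : ZMod L × ZMod L, F ![0, p.1, p.2] := by
    intro a
    have h2 : ∑ b : ZMod L, ∑ c : ZMod L, F ![a,b,c]
        = ∑ p : ZMod L × ZMod L, F ![a, p.1, p.2] :=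
      (Fintype.sum_prod_type (f := fun p : ZMod L × ZMod L => F ![a, p.1, p.2])).symm
    rw [h2]
    refine (Fintype.sum_equiv ((Equiv.addLeft a).prodCongr (Equiv.addLeft a))
      (fun p => F ![0, p.1, p.2]) (fun p => F ![a, p.1, p.2]) ?_).symm
    intro p
    simp only [Equiv.prodCongr_apply, Equiv.coe_addLeft, Prod.map]
    have := hF 0 p.1 p.2 a
    rw [← this]
    congr 1
    ext i
    fin_cases i <;> simp [add_comm]
  simp only [h1, Finset.sum_const, Finset.card_univ, ZMod.card, nsmul_eq_mul]

private lemma shifted_sum (x : ZMod L → ℝ) (s : ZMod L) :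
    ∑ c : ZMod L, x (c + s) = ∑ j : ZMod L, x j :=
  Fintype.sum_equiv (Equiv.addRight s) _ _ (fun c => rfl)

private lemma swap4 (f : ZMod L → ZMod L → ZMod L → ZMod L → ℝ) :
    ∑ a : ZMod L, ∑ b : ZMod L, ∑ c : ZMod L, ∑ s : ZMod L, f a b c s
    = ∑ s : ZMod L, ∑ a : ZMod L, ∑ b : ZMod L, ∑ c : ZMod L, f a b c s := by
  have h1 : ∀ a b : ZMod L, ∑ c : ZMod L, ∑ s : ZMod L, f a b c s
      = ∑ s : ZMod L, ∑ c : ZMod L, f a b c s := fun a b => Finset.sum_comm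
  simp only [h1]
  have h2 : ∀ a : ZMod L, ∑ b : ZMod L, ∑ s : ZMod L, (∑ c : ZMod L, f a b c s)
      = ∑ s : ZMod L, ∑ b : ZMod L, ∑ c : ZMod L, f a b c s := fun a => Finset.sum_comm
  simp only [h2]
  exact Finset.sum_comm

private lemma sum_ac3 (x : ZMod L → ℝ) :
    ∑ k : Fin 3 → ZMod L, autocorr k x = (∑ j : ZMod L, x j)^3 := by
  have hL0 : (L:ℝ) ≠ 0 := Nat.cast_ne_zero.mpr (NeZero.ne L)
  set T : ℝ := ∑ j : ZMod L, x j with hT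
  have key : ∀ s : ZMod L,
      ∑ a : ZMod L, ∑ b : ZMod L, ∑ c : ZMod L, x (a+s) * x (b+s) * x (c+s) = T^3 := by
    intro s
    have e2 : ∀ a b : ZMod L, ∑ c : ZMod L, x (a+s) * x (b+s) * x (c+s)
        = x (a+s) * x (b+s) * T := by
      intro a b; rw [← Finset.mul_sum, shifted_sum]
    simp only [e2]
    have e3 : ∀ a : ZMod L, ∑ b : ZMod L, x (a+s) * x (b+s) * T
        = x (a+s) * T * T := by
      intro a
      rw [Finset.sum_congr rfl (fun b _ => show x (a+s) * x (b+s) * T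
        = (x (a+s) * T) * x (b+s) from by ring), ← Finset.mul_sum, shifted_sum]
    simp only [e3]
    rw [Finset.sum_congr rfl (fun a _ => show x (a+s) * T * T
      = (T * T) * x (a+s) from by ring), ← Finset.mul_sum, shifted_sum]
    ring
  rw [sum_tripleX]
  simp only [ac3_eq]
  simp only [← Finset.mul_sum]
  rw [swap4]
  simp only [key]
  rw [Finset.sum_const, Finset.card_univ, ZMod.card, nsmul_eq_mul]
  field_simp
private lemma ac_int (x : ZMod L → ℝ) (hx : ∀ j, x j = 0 ∨ x j = 1) (k : Fin 3 → ZMod L) :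
    ∃ z : ℤ, (L:ℝ) * autocorr k x = z := by
  have hL0 : (L:ℝ) ≠ 0 := Nat.cast_ne_zero.mpr (NeZero.ne L)
  have hterm : ∀ s : ZMod L, ∃ z : ℤ, ∏ i, x (k i + s) = (z:ℝ) := by
    intro s
    have h01 : (∏ i, x (k i + s)) = 0 ∨ (∏ i, x (k i + s)) = 1 := by
      rw [Fin.prod_univ_three]
      rcases hx (k 0 + s) with h0|h0 <;> rcases hx (k 1 + s) with h1|h1 <;>
        rcases hx (k 2 + s) with h2|h2 <;> simp [h0, h1, h2]
    rcases h01 with h|h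
    · exact ⟨0, by simp [h]⟩
    · exact ⟨1, by simp [h]⟩
  choose z hz using hterm
  refine ⟨∑ s : ZMod L, z s, ?_⟩
  rw [autocorr, ← mul_assoc, mul_one_div_cancel hL0, one_mul,
    Finset.sum_congr rfl (fun s _ => hz s)]
  push_cast
  rfl

private lemma ac000 (x : ZMod L → ℝ) (hx : ∀ j, x j = 0 ∨ x j = 1) :
    autocorr ![0,0,0] x = autocorr (fun _ : Fin 1 => (0 : ZMod L)) x := by
  simp only [autocorr, Fin.prod_univ_three, Fin.prod_univ_one]
  congr 1
  refine Finset.sum_congr rfl fun s _ => ?_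
  simp only [Matrix.cons_val_zero, Matrix.cons_val_one, Matrix.head_cons, zero_add]
  have h2 : (![(0:ZMod L),0,0] : Fin 3 → ZMod L) 2 = 0 := rfl
  rw [h2, zero_add]
  rcases hx s with h|h <;> simp [h]

private lemma ac00c (x : ZMod L → ℝ) (hx : ∀ j, x j = 0 ∨ x j = 1) (c : ZMod L) :
    autocorr ![0,0,-c] x = autocorr ![0,0,c] x := by
  have key : ∀ e : ZMod L, autocorr ![0,0,e] x = (1/(L:ℝ)) * ∑ s : ZMod L, x s * x (e+s) := by
    intro e
    simp only [autocorr, Fin.prod_univ_three]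
    congr 1
    refine Finset.sum_congr rfl fun s _ => ?_
    simp only [Matrix.cons_val_zero, Matrix.cons_val_one, Matrix.head_cons, zero_add]
    have h2 : (![(0:ZMod L),0,e] : Fin 3 → ZMod L) 2 = e := rfl
    rw [h2]
    rcases hx s with h|h <;> simp [h]
  rw [key, key]
  congr 1
  refine (Fintype.sum_equiv (Equiv.addLeft c) (fun s => x s * x (c+s))
    (fun t => x t * x (-c+t)) (fun s => ?_)).symm
  simp only [Equiv.coe_addLeft]
  rw [neg_add_cancel_left]
  ring

private lemma two_torsion_unique {c c' : ZMod L} (hc : c ≠ 0) (hc' : c' ≠ 0)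
    (h2 : c + c = 0) (h2' : c' + c' = 0) : c = c' := by
  have key : ∀ e : ZMod L, e ≠ 0 → e + e = 0 → e.val + e.val = L := by
    intro e he h
    have hd : (L:ℕ) ∣ e.val + e.val := by
      rw [← ZMod.natCast_eq_zero_iff]
      push_cast
      rw [ZMod.natCast_zmod_val, h]
    obtain ⟨m, hm⟩ := hd
    have hvlt := ZMod.val_lt e
    have hv0 : e.val ≠ 0 := fun h0 => he ((ZMod.val_eq_zero e).mp h0)
    have hmlt : m < 2 := by
      by_contra h'
      push_neg at h'
      have : L * 2 ≤ L * m := Nat.mul_le_mul_left L h'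
      omega
    interval_cases m <;> omega
  have := key c hc h2
  have := key c' hc' h2'
  exact ZMod.val_injective L (by omega)

private lemma three_torsion {u a : ZMod L} (hu : u ≠ 0) (ha : a ≠ 0)
    (h3 : u+u+u = 0) (h3' : a+a+a = 0) : a = u ∨ a = -u := by
  have key : ∀ e : ZMod L, e ≠ 0 → e + e + e = 0 →
      e.val + e.val + e.val = L ∨ e.val + e.val + e.val = L + L := by
    intro e he h
    have hd : (L:ℕ) ∣ e.val + e.val + e.val := by
      rw [← ZMod.natCast_eq_zero_iff]
      push_cast
      rw [ZMod.natCast_zmod_val, h]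
    obtain ⟨m, hm⟩ := hd
    have hvlt := ZMod.val_lt e
    have hv0 : e.val ≠ 0 := fun h0 => he ((ZMod.val_eq_zero e).mp h0)
    have hmlt : m < 3 := by
      by_contra h'
      push_neg at h'
      have : L * 3 ≤ L * m := Nat.mul_le_mul_left L h'
      omega
    interval_cases m <;> omega
  have mixed : ∀ h1 : u.val + u.val + u.val = L, a.val + a.val + a.val = L + L → a = -u := by
    intro h1 h2
    have hadd : a + u = 0 := by
      have h : ((a.val + u.val : ℕ) : ZMod L) = ((L : ℕ) : ZMod L) := by
        congr 1
        omega
      rw [ZMod.natCast_self] at h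
      push_cast at h
      rwa [ZMod.natCast_zmod_val, ZMod.natCast_zmod_val] at h
    exact eq_neg_of_add_eq_zero_left hadd
  have mixed' : ∀ h1 : u.val + u.val + u.val = L + L, a.val + a.val + a.val = L → a = -u := by
    intro h1 h2
    have hadd : a + u = 0 := by
      have h : ((a.val + u.val : ℕ) : ZMod L) = ((L : ℕ) : ZMod L) := by
        congr 1
        omega
      rw [ZMod.natCast_self] at h
      push_cast at h
      rwa [ZMod.natCast_zmod_val, ZMod.natCast_zmod_val] at h
    exact eq_neg_of_add_eq_zero_left hadd
  rcases key u hu h3 with h1|h1 <;> rcases key a ha h3' with h2|h2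
  · exact Or.inl (ZMod.val_injective L (by omega))
  · exact Or.inr (mixed h1 h2)
  · exact Or.inr (mixed' h1 h2)
  · exact Or.inl (ZMod.val_injective L (by omega))

private lemma exists_axis (C : Finset (ZMod L × ZMod L))
    (h3 : C.card = 3) (h0 : ((0,0) : ZMod L × ZMod L) ∉ C)
    (hs : ∀ p ∈ C, ((p.2, p.1) : ZMod L × ZMod L) ∈ C)
    (ha : ∀ p ∈ C, ((-p.1, p.2 - p.1) : ZMod L × ZMod L) ∈ C) :
    ∃ c : ZMod L, c ≠ 0 ∧ ((0 : ZMod L), c) ∈ C := by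
  have hgen : ∀ u v : ZMod L, (u,v) ∈ C → u ≠ 0 → v ≠ 0 → u ≠ v →
      ¬(u+u+u = 0 ∧ v = -u) → False := by
    intro u v hm hu hv huv ht
    have m2 : ((v,u) : ZMod L × ZMod L) ∈ C := hs _ hm
    have m3 : ((-u, v-u) : ZMod L × ZMod L) ∈ C := ha _ hm
    have m4 : ((v-u, -u) : ZMod L × ZMod L) ∈ C := hs _ m3
    have d12 : ((u,v) : ZMod L × ZMod L) ≠ (v,u) := by
      rw [Ne, Prod.mk.injEq]
      rintro ⟨h1, -⟩
      exact huv h1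
    have d13 : ((u,v) : ZMod L × ZMod L) ≠ (-u, v-u) := by
      rw [Ne, Prod.mk.injEq]
      rintro ⟨-, h2⟩
      exact hu (by linear_combination h2)
    have d14 : ((u,v) : ZMod L × ZMod L) ≠ (v-u, -u) := by
      rw [Ne, Prod.mk.injEq]
      rintro ⟨h1, h2⟩
      exact ht ⟨by linear_combination h1 + h2, h2⟩
    have d23 : ((v,u) : ZMod L × ZMod L) ≠ (-u, v-u) := by
      rw [Ne, Prod.mk.injEq]
      rintro ⟨h1, h2⟩
      exact ht ⟨by linear_combination h1 + h2, h1⟩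
    have d24 : ((v,u) : ZMod L × ZMod L) ≠ (v-u, -u) := by
      rw [Ne, Prod.mk.injEq]
      rintro ⟨h1, -⟩
      exact hu (by linear_combination h1)
    have d34 : ((-u, v-u) : ZMod L × ZMod L) ≠ (v-u, -u) := by
      rw [Ne, Prod.mk.injEq]
      rintro ⟨h1, -⟩
      exact hv (by linear_combination -h1)
    have hsub : ({(u,v),(v,u),(-u,v-u),(v-u,-u)} : Finset (ZMod L × ZMod L)) ⊆ C := by
      intro r hr
      simp only [Finset.mem_insert, Finset.mem_singleton] at hr
      rcases hr with rfl|rfl|rfl|rfl <;> assumption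
    have hcard : ({(u,v),(v,u),(-u,v-u),(v-u,-u)} : Finset (ZMod L × ZMod L)).card = 4 := by
      rw [Finset.card_insert_of_notMem (by simp [d12, d13, d14]),
        Finset.card_insert_of_notMem (by simp [d23, d24]),
        Finset.card_insert_of_notMem (by simp [d34]),
        Finset.card_singleton]
    have := Finset.card_le_card hsub
    rw [hcard, h3] at this
    omega
  have hdeg : ∀ u v : ZMod L, (u,v) ∈ C → (u = 0 ∨ v = 0 ∨ u = v) →
      ∃ c : ZMod L, c ≠ 0 ∧ ((0 : ZMod L), c) ∈ C := by
    intro u v hm h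
    rcases h with rfl|rfl|rfl
    · exact ⟨v, fun h => h0 (h ▸ hm), hm⟩
    · exact ⟨u, fun h => h0 (by simpa [h] using hs _ hm), hs _ hm⟩
    · have m2 : ((-u, u - u) : ZMod L × ZMod L) ∈ C := ha _ hm
      rw [sub_self] at m2
      have m3 := hs _ m2
      simp only at m3
      refine ⟨-u, fun h => ?_, m3⟩
      rw [neg_eq_zero] at h
      exact h0 (by simpa [h] using hm)
  have hne : C.Nonempty := Finset.card_pos.mp (by omega)
  obtain ⟨⟨u, v⟩, hm⟩ := hne
  by_cases hu : u = 0
  · exact hdeg u v hm (Or.inl hu)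
  by_cases hv : v = 0
  · exact hdeg u v hm (Or.inr (Or.inl hv))
  by_cases hd : u = v
  · exact hdeg u v hm (Or.inr (Or.inr hd))
  by_cases ht : u + u + u = 0 ∧ v = -u
  · obtain ⟨ht3, rfl⟩ := ht
    have hsp : ((-u, u) : ZMod L × ZMod L) ∈ C := hs _ hm
    have hz : (C \ {((u : ZMod L), -u), (-u, u)}).Nonempty := by
      apply Finset.card_pos.mp
      have hle := Finset.le_card_sdiff ({((u : ZMod L), -u), (-u, u)} : Finset _) C
      have : ({((u : ZMod L), -u), (-u, u)} : Finset (ZMod L × ZMod L)).card ≤ 2 :=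
        (Finset.card_insert_le _ _).trans (by simp)
      omega
    obtain ⟨⟨a, b⟩, hzz⟩ := hz
    rw [Finset.mem_sdiff] at hzz
    obtain ⟨hzC, hzT⟩ := hzz
    simp only [Finset.mem_insert, Finset.mem_singleton, not_or] at hzT
    obtain ⟨hzT1, hzT2⟩ := hzT
    by_cases ha0 : a = 0
    · exact hdeg a b hzC (Or.inl ha0)
    by_cases hb0 : b = 0
    · exact hdeg a b hzC (Or.inr (Or.inl hb0))
    by_cases hab : a = b
    · exact hdeg a b hzC (Or.inr (Or.inr hab))
    by_cases hzt : a + a + a = 0 ∧ b = -a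
    · obtain ⟨hz3, rfl⟩ := hzt
      rcases three_torsion hu ha0 ht3 hz3 with rfl|rfl
      · exact absurd rfl hzT1
      · rw [neg_neg] at hzT2
        exact absurd rfl hzT2
    · exact (hgen a b hzC ha0 hb0 hab hzt).elim
  · exact (hgen u v hm hu hv hd ht).elim

private lemma endgame (N : ZMod L × ZMod L → ℝ)
    (hint : ∀ p, ∃ z : ℤ, N p = z)
    (hs : ∀ p : ZMod L × ZMod L, N (p.2, p.1) = N p)
    (ha : ∀ p : ZMod L × ZMod L, N (-p.1, p.2 - p.1) = N p)
    (h00 : N (0,0) = 0)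
    (hev : ∀ c : ZMod L, N (0, -c) = N (0, c))
    (hsum : ∑ p : ZMod L × ZMod L, N p = 0)
    (hsq : ∑ p : ZMod L × ZMod L, (N p)^2 = 6) : False := by
  classical
  -- Step 1: all values in {-1, 0, 1}
  have hval : ∀ p : ZMod L × ZMod L, N p = -1 ∨ N p = 0 ∨ N p = 1 := by
    intro p
    by_cases hp0 : p = ((0 : ZMod L), (0 : ZMod L))
    · rw [hp0, h00]; tauto
    obtain ⟨q, hqp, hqN⟩ : ∃ q, q ≠ p ∧ N q = N p := by
      by_cases hd : p.1 = p.2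
      · refine ⟨((0 : ZMod L), -p.1), ?_, ?_⟩
        · intro h
          apply hp0
          have h1 : p.1 = 0 := by rw [← h]
          exact Prod.ext h1 (by rw [← hd, h1])
        · have h1 : N (-p.1, p.2 - p.1) = N p := ha p
          rw [← hd, sub_self] at h1
          rw [← h1]
          exact hs ((-p.1, 0) : ZMod L × ZMod L)
      · refine ⟨(p.2, p.1), ?_, hs p⟩
        intro h
        exact hd (congrArg Prod.snd h)
    have hb : (N q)^2 + (N p)^2 ≤ 6 := by
      rw [← hsq]
      calc (N q)^2 + (N p)^2 = ∑ x ∈ ({q, p} : Finset (ZMod L × ZMod L)), (N x)^2 :=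
            (Finset.sum_pair (f := fun x => (N x)^2) hqp).symm
        _ ≤ ∑ x : ZMod L × ZMod L, (N x)^2 :=
            Finset.sum_le_sum_of_subset_of_nonneg (Finset.subset_univ _)
              (fun i _ _ => sq_nonneg (N i))
    rw [hqN] at hb
    obtain ⟨z, hz⟩ := hint p
    rw [hz] at hb
    have hz3 : z^2 + z^2 ≤ 6 := by exact_mod_cast hb
    have hle : z ≤ 1 := by nlinarith [sq_nonneg (z - 2)]
    have hge : -1 ≤ z := by nlinarith [sq_nonneg (z + 2)]
    have : z = -1 ∨ z = 0 ∨ z = 1 := by omega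
    rcases this with h|h|h <;> rw [hz, h] <;> norm_num
  -- Step 2: P and M
  set P := Finset.univ.filter (fun p : ZMod L × ZMod L => N p = 1) with hP
  set M := Finset.univ.filter (fun p : ZMod L × ZMod L => N p = -1) with hM
  have hsplit : ∀ p : ZMod L × ZMod L,
      N p = (if p ∈ P then (1:ℝ) else 0) + (if p ∈ M then (-1:ℝ) else 0) := by
    intro p
    have hp : p ∈ P ↔ N p = 1 := by simp [hP]
    have hm : p ∈ M ↔ N p = -1 := by simp [hM]
    rcases hval p with h|h|h <;> simp [hp, hm, h] <;> norm_num
  have hsplit2 : ∀ p : ZMod L × ZMod L,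
      (N p)^2 = (if p ∈ P then (1:ℝ) else 0) + (if p ∈ M then (1:ℝ) else 0) := by
    intro p
    have hp : p ∈ P ↔ N p = 1 := by simp [hP]
    have hm : p ∈ M ↔ N p = -1 := by simp [hM]
    rcases hval p with h|h|h <;> simp [hp, hm, h] <;> norm_num
  have hsum1 : (P.card : ℝ) - M.card = 0 := by
    rw [← hsum, Finset.sum_congr rfl (fun p _ => hsplit p), Finset.sum_add_distrib]
    rw [Finset.sum_ite_mem, Finset.sum_ite_mem, Finset.univ_inter, Finset.univ_inter]
    simp [sub_eq_add_neg]
  have hsum2 : (P.card : ℝ) + M.card = 6 := by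
    rw [← hsq, Finset.sum_congr rfl (fun p _ => hsplit2 p), Finset.sum_add_distrib]
    rw [Finset.sum_ite_mem, Finset.sum_ite_mem, Finset.univ_inter, Finset.univ_inter]
    simp
  have hPM : P.card = M.card := by
    have : (P.card : ℝ) = M.card := by linarith
    exact_mod_cast this
  have hP6 : P.card + M.card = 6 := by exact_mod_cast hsum2
  have hP3 : P.card = 3 := by omega
  have hM3 : M.card = 3 := by omega
  -- invariance
  have hPmem : ∀ p : ZMod L × ZMod L, p ∈ P ↔ N p = 1 := fun p => by simp [hP]
  have hMmem : ∀ p : ZMod L × ZMod L, p ∈ M ↔ N p = -1 := fun p => by simp [hM]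
  have hPs : ∀ p ∈ P, ((p.2, p.1) : ZMod L × ZMod L) ∈ P := by
    intro p hp
    rw [hPmem] at hp ⊢
    rw [hs]; exact hp
  have hPa : ∀ p ∈ P, ((-p.1, p.2 - p.1) : ZMod L × ZMod L) ∈ P := by
    intro p hp
    rw [hPmem] at hp ⊢
    rw [ha]; exact hp
  have hMs : ∀ p ∈ M, ((p.2, p.1) : ZMod L × ZMod L) ∈ M := by
    intro p hp
    rw [hMmem] at hp ⊢
    rw [hs]; exact hp
  have hMa : ∀ p ∈ M, ((-p.1, p.2 - p.1) : ZMod L × ZMod L) ∈ M := by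
    intro p hp
    rw [hMmem] at hp ⊢
    rw [ha]; exact hp
  have hP0 : ((0,0) : ZMod L × ZMod L) ∉ P := by
    rw [hPmem, h00]; norm_num
  have hM0 : ((0,0) : ZMod L × ZMod L) ∉ M := by
    rw [hMmem, h00]; norm_num
  -- find axis elements
  obtain ⟨c, hc0, hcP⟩ := exists_axis P hP3 hP0 hPs hPa
  obtain ⟨c', hc'0, hc'M⟩ := exists_axis M hM3 hM0 hMs hMa
  -- orbit of (0,c) in P
  have h1 : ((c, 0) : ZMod L × ZMod L) ∈ P := hPs _ hcP
  have h2 : ((-c, -c) : ZMod L × ZMod L) ∈ P := by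
    have := hPa _ h1
    simpa using this
  have key : ∀ (C : Finset (ZMod L × ZMod L)) (e : ZMod L), e ≠ 0 → C.card = 3 →
      ((0,e) : ZMod L × ZMod L) ∈ C → ((e,0) : ZMod L × ZMod L) ∈ C →
      ((-e,-e) : ZMod L × ZMod L) ∈ C → ((0,-e) : ZMod L × ZMod L) ∈ C → e + e = 0 := by
    intro C e he hC3 m1 m2 m3 m4
    have d12 : ((0,e) : ZMod L × ZMod L) ≠ (e,0) := by
      rw [Ne, Prod.mk.injEq]
      rintro ⟨h1', -⟩
      exact he h1'.symm
    have d13 : ((0,e) : ZMod L × ZMod L) ≠ (-e,-e) := by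
      rw [Ne, Prod.mk.injEq]
      rintro ⟨h1', -⟩
      exact he (by linear_combination h1')
    have d23 : ((e,0) : ZMod L × ZMod L) ≠ (-e,-e) := by
      rw [Ne, Prod.mk.injEq]
      rintro ⟨-, h2'⟩
      exact he (by linear_combination h2')
    have hsub : ({(0,e),(e,0),(-e,-e)} : Finset (ZMod L × ZMod L)) ⊆ C := by
      intro r hr
      simp only [Finset.mem_insert, Finset.mem_singleton] at hr
      rcases hr with rfl|rfl|rfl <;> assumption
    have hcard : ({(0,e),(e,0),(-e,-e)} : Finset (ZMod L × ZMod L)).card = 3 := by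
      rw [Finset.card_insert_of_notMem (by simp [d12, d13]),
        Finset.card_insert_of_notMem (by simp [d23]), Finset.card_singleton]
    have heq := Finset.eq_of_subset_of_card_le hsub (by rw [hcard, hC3])
    rw [← heq] at m4
    simp only [Finset.mem_insert, Finset.mem_singleton, Prod.mk.injEq] at m4
    rcases m4 with ⟨-, h'⟩|⟨h', -⟩|⟨h', -⟩
    · linear_combination -h'
    · exact absurd h'.symm he
    · exact absurd (by linear_combination h' : e = 0) he
  have hmcP : ((0, -c) : ZMod L × ZMod L) ∈ P := by
    rw [hPmem, hev]
    rw [hPmem] at hcP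
    exact hcP
  have h2c : c + c = 0 := key P c hc0 hP3 hcP h1 h2 hmcP
  have h1' : ((c', 0) : ZMod L × ZMod L) ∈ M := hMs _ hc'M
  have h2' : ((-c', -c') : ZMod L × ZMod L) ∈ M := by
    have := hMa _ h1'
    simpa using this
  have hmcM : ((0, -c') : ZMod L × ZMod L) ∈ M := by
    rw [hMmem, hev]
    rw [hMmem] at hc'M
    exact hc'M
  have h2c' : c' + c' = 0 := key M c' hc'0 hM3 hc'M h1' h2' hmcM
  have hcc : c = c' := two_torsion_unique hc0 hc'0 h2c h2c'
  rw [hPmem] at hcP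
  rw [hMmem] at hc'M
  rw [hcc, hc'M] at hcP
  norm_num at hcP


end aux

/-- No pair of Boolean signals with equal first-order autocorrelations can have
`B₃(x₁,x₂) = 6/L`. -/
theorem B3_ne_six_div_L {L : ℕ} [NeZero L] (x₁ x₂ : ZMod L → ℝ)
    (hx₁ : ∀ j, x₁ j = 0 ∨ x₁ j = 1) (hx₂ : ∀ j, x₂ j = 0 ∨ x₂ j = 1)
    (hA0 : autocorr (fun _ : Fin 1 => (0 : ZMod L)) x₁
      = autocorr (fun _ : Fin 1 => (0 : ZMod L)) x₂) :
    ∑ k : Fin 3 → ZMod L, (autocorr k x₁ - autocorr k x₂) ^ 2 ≠ 6 / (L : ℝ) := by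
  intro hB
  have hL0 : (L:ℝ) ≠ 0 := Nat.cast_ne_zero.mpr (NeZero.ne L)
  set D : (Fin 3 → ZMod L) → ℝ := fun k => autocorr k x₁ - autocorr k x₂ with hD
  have hDshift : ∀ a b c t : ZMod L, D ![a+t,b+t,c+t] = D ![a,b,c] := by
    intro a b c t
    simp only [hD, shift3]
  have hT : ∑ j : ZMod L, x₁ j = ∑ j : ZMod L, x₂ j := by
    rw [ac1_eq, ac1_eq] at hA0
    field_simp at hA0
    exact hA0
  have hsumD : ∑ k : Fin 3 → ZMod L, D k = 0 := by
    simp only [hD]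
    rw [Finset.sum_sub_distrib, sum_ac3, sum_ac3, hT, sub_self]
  set N : ZMod L × ZMod L → ℝ := fun p => (L:ℝ) * D ![0, p.1, p.2] with hN
  have hint : ∀ p : ZMod L × ZMod L, ∃ z : ℤ, N p = z := by
    intro p
    obtain ⟨z₁, hz₁⟩ := ac_int x₁ hx₁ ![0, p.1, p.2]
    obtain ⟨z₂, hz₂⟩ := ac_int x₂ hx₂ ![0, p.1, p.2]
    refine ⟨z₁ - z₂, ?_⟩
    simp only [hN, hD]
    push_cast
    rw [← hz₁, ← hz₂]
    ring
  have hsym : ∀ p : ZMod L × ZMod L, N (p.2, p.1) = N p := by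
    intro p
    simp only [hN, hD]
    rw [perm23 x₁ 0 p.2 p.1, perm23 x₂ 0 p.2 p.1]
  have hrot : ∀ p : ZMod L × ZMod L, N (-p.1, p.2 - p.1) = N p := by
    intro p
    simp only [hN, hD]
    rw [acha x₁ p.1 p.2, acha x₂ p.1 p.2]
  have h00 : N ((0 : ZMod L), (0 : ZMod L)) = 0 := by
    simp only [hN, hD]
    rw [ac000 x₁ hx₁, ac000 x₂ hx₂, hA0]
    ring
  have hev : ∀ c : ZMod L, N (0, -c) = N (0, c) := by
    intro c
    simp only [hN, hD]
    rw [ac00c x₁ hx₁ c, ac00c x₂ hx₂ c]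
  have hmas1 := master D hDshift
  have hmas2 := master (fun k => (D k)^2) (fun a b c t => by simp only [hDshift])
  have hsum : ∑ p : ZMod L × ZMod L, N p = 0 := by
    simp only [hN]
    rw [← Finset.mul_sum, ← hmas1, hsumD]
  have hsq : ∑ p : ZMod L × ZMod L, (N p)^2 = 6 := by
    have h1 : ∑ p : ZMod L × ZMod L, ((D ![0, p.1, p.2]))^2 = (6 / (L:ℝ)) / (L:ℝ) := by
      have h2 : (L:ℝ) * ∑ p : ZMod L × ZMod L, (D ![0, p.1, p.2])^2 = 6 / (L:ℝ) := by
        rw [← hmas2]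
        exact hB
      field_simp at h2 ⊢
      linarith
    simp only [hN, mul_pow]
    rw [← Finset.mul_sum, h1]
    field_simp
  exact endgame N hint hsym hrot h00 hev hsum hsq
end

section
/- If x_1, x_2 : Z_L → {0,1} satisfy A_k(x_1) ≠ A_k(x_2) for some k in Z_L^3 and A_j(x_1) = A_j(x_2) for all j of orders 1 and 2, then B_3(x_1,x_2) := sum over k in Z_L^3 of (A_k(x_1) − A_k(x_2))^2 is a positive integer multiple of 6/L. -/
lemma two_dvd_sum_orbits {α : Type*} [DecidableEq α] (f : α → ℤ) (ρ : α → α) :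
    ∀ s : Finset α, (∀ a ∈ s, ρ a ∈ s) → (∀ a ∈ s, ρ (ρ a) = a) →
    (∀ a ∈ s, ρ a ≠ a) → (∀ a ∈ s, f (ρ a) = f a) → (2:ℤ) ∣ ∑ a ∈ s, f a := by
  intro s
  induction s using Finset.strongInduction with
  | _ s ih =>
    intro hmem h2 hfix hf
    rcases s.eq_empty_or_nonempty with rfl | ⟨a, ha⟩
    · simp
    have hρa : ρ a ∈ s := hmem a ha
    have d1 : ρ a ≠ a := hfix a ha
    have hinj : ∀ b ∈ s, ∀ c ∈ s, ρ b = ρ c → b = c := by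
      intro b hb c hc h
      have h' := congrArg ρ h
      rwa [h2 b hb, h2 c hc] at h'
    set u : Finset α := {a, ρ a} with hu
    have hus : u ⊆ s := by
      intro b hb
      simp only [hu, Finset.mem_insert, Finset.mem_singleton] at hb
      rcases hb with rfl | rfl <;> assumption
    have hsumu : ∑ b ∈ u, f b = 2 * f a := by
      rw [hu, Finset.sum_insert (by simpa using d1.symm), Finset.sum_singleton, hf a ha]
      ring
    have hkey := Finset.sum_sdiff (f := f) hus
    have hss : s \ u ⊂ s := by
      apply Finset.sdiff_ssubset hus
      exact ⟨a, by simp [hu]⟩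
    have hrec : (2:ℤ) ∣ ∑ b ∈ s \ u, f b := by
      apply ih _ hss
      · intro b hb
        rw [Finset.mem_sdiff] at hb ⊢
        obtain ⟨hbs, hbu⟩ := hb
        simp only [hu, Finset.mem_insert, Finset.mem_singleton] at hbu ⊢
        push_neg at hbu ⊢
        refine ⟨hmem b hbs, ?_, ?_⟩
        · intro h
          exact hbu.2 (hinj b hbs (ρ a) hρa (h.trans (h2 a ha).symm))
        · intro h
          exact hbu.1 (hinj b hbs a ha h)
      · exact fun b hb => h2 b (Finset.mem_sdiff.1 hb).1
      · exact fun b hb => hfix b (Finset.mem_sdiff.1 hb).1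
      · exact fun b hb => hf b (Finset.mem_sdiff.1 hb).1
    rw [← hkey, hsumu]
    exact dvd_add hrec ⟨f a, rfl⟩

lemma three_dvd_sum_orbits {α : Type*} [DecidableEq α] (f : α → ℤ) (ρ : α → α) :
    ∀ s : Finset α, (∀ a ∈ s, ρ a ∈ s) → (∀ a ∈ s, ρ (ρ (ρ a)) = a) →
    (∀ a ∈ s, ρ a ≠ a) → (∀ a ∈ s, f (ρ a) = f a) → (3:ℤ) ∣ ∑ a ∈ s, f a := by
  intro s
  induction s using Finset.strongInduction with
  | _ s ih =>
    intro hmem h3 hfix hf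
    rcases s.eq_empty_or_nonempty with rfl | ⟨a, ha⟩
    · simp
    have hρa : ρ a ∈ s := hmem a ha
    have hρρa : ρ (ρ a) ∈ s := hmem _ hρa
    have d1 : ρ a ≠ a := hfix a ha
    have d2 : ρ (ρ a) ≠ ρ a := hfix _ hρa
    have hinj : ∀ b ∈ s, ∀ c ∈ s, ρ b = ρ c → b = c := by
      intro b hb c hc h
      have h' := congrArg (fun z => ρ (ρ z)) h
      rwa [h3 b hb, h3 c hc] at h'
    have d3 : ρ (ρ a) ≠ a := by
      intro h
      have h' := congrArg ρ h
      rw [h3 a ha] at h'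
      exact d1 h'.symm
    set u : Finset α := {a, ρ a, ρ (ρ a)} with hu
    have hus : u ⊆ s := by
      intro b hb
      simp only [hu, Finset.mem_insert, Finset.mem_singleton] at hb
      rcases hb with rfl | rfl | rfl <;> assumption
    have hsumu : ∑ b ∈ u, f b = 3 * f a := by
      rw [hu, Finset.sum_insert (by simp [d1.symm, d3.symm]),
        Finset.sum_insert (by simpa using d2.symm), Finset.sum_singleton,
        hf a ha, hf (ρ a) hρa, hf a ha]
      ring
    have hkey := Finset.sum_sdiff (f := f) hus
    have hss : s \ u ⊂ s := by
      apply Finset.sdiff_ssubset hus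
      exact ⟨a, by simp [hu]⟩
    have hrec : (3:ℤ) ∣ ∑ b ∈ s \ u, f b := by
      apply ih _ hss
      · intro b hb
        rw [Finset.mem_sdiff] at hb ⊢
        obtain ⟨hbs, hbu⟩ := hb
        simp only [hu, Finset.mem_insert, Finset.mem_singleton] at hbu ⊢
        push_neg at hbu ⊢
        refine ⟨hmem b hbs, ?_, ?_, ?_⟩
        · intro h
          exact hbu.2.2 (hinj b hbs (ρ (ρ a)) hρρa (h.trans (h3 a ha).symm))
        · intro h
          exact hbu.1 (hinj b hbs a ha h)
        · intro h
          exact hbu.2.1 (hinj b hbs (ρ a) hρa h)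
      · exact fun b hb => h3 b (Finset.mem_sdiff.1 hb).1
      · exact fun b hb => hfix b (Finset.mem_sdiff.1 hb).1
      · exact fun b hb => hf b (Finset.mem_sdiff.1 hb).1
    rw [← hkey, hsumu]
    exact dvd_add hrec ⟨f a, rfl⟩

def c2 {L : ℕ} [NeZero L] (y : ZMod L → ℤ) (u v : ZMod L) : ℤ :=
  ∑ s : ZMod L, y (u + s) * y (v + s)

def c3 {L : ℕ} [NeZero L] (y : ZMod L → ℤ) (u v w : ZMod L) : ℤ :=
  ∑ s : ZMod L, y (u + s) * y (v + s) * y (w + s)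

variable {L : ℕ} [NeZero L]

lemma c2_swap (y : ZMod L → ℤ) (u v : ZMod L) : c2 y u v = c2 y v u := by
  unfold c2; exact Finset.sum_congr rfl fun s _ => by ring

lemma c3_swap23 (y : ZMod L → ℤ) (u v w : ZMod L) : c3 y u v w = c3 y u w v := by
  unfold c3; exact Finset.sum_congr rfl fun s _ => by ring

lemma c3_cycle (y : ZMod L → ℤ) (u v w : ZMod L) : c3 y u v w = c3 y w u v := by
  unfold c3; exact Finset.sum_congr rfl fun s _ => by ring

lemma c3_shift (y : ZMod L → ℤ) (u v w t : ZMod L) :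
    c3 y (u + t) (v + t) (w + t) = c3 y u v w := by
  unfold c3
  apply Fintype.sum_bijective (fun s => t + s) (Equiv.addLeft t).bijective
  intro s
  simp only [add_assoc]

lemma c3_shift' (y : ZMod L → ℤ) (t d₁ d₂ : ZMod L) :
    c3 y t (t + d₁) (t + d₂) = c3 y 0 d₁ d₂ := by
  have h := c3_shift y 0 d₁ d₂ t
  rw [zero_add] at h
  rw [← h]
  congr 1 <;> ring

lemma c3_idem (y : ZMod L → ℤ) (hy : ∀ j, y j * y j = y j) (u w : ZMod L) :
    c3 y u u w = c2 y u w := by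
  unfold c3 c2
  exact Finset.sum_congr rfl fun s _ => by rw [hy (u + s)]

lemma c3_dvd (y : ZMod L → ℤ) (s : ZMod L) (hs : s ≠ 0) (h3 : s + s + s = 0) :
    (3:ℤ) ∣ c3 y 0 s (s + s) := by
  unfold c3
  apply three_dvd_sum_orbits (fun t => y (0 + t) * y (s + t) * y ((s + s) + t)) (fun t => t + s)
    Finset.univ
  · intro a _; exact Finset.mem_univ _
  · intro a _; linear_combination (norm := ring_nf) h3
  · intro a _ h
    exact hs (by linear_combination h)
  · intro t _
    have e1 : (0:ZMod L) + (t + s) = s + t := by ring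
    have e2 : s + (t + s) = (s + s) + t := by ring
    have e3 : (s + s) + (t + s) = 0 + t := by linear_combination h3
    simp only [e1, e2, e3]
    ring
lemma c3_cast {L : ℕ} [NeZero L] (y : ZMod L → ℤ) (x : ZMod L → ℝ)
    (hxy : ∀ j, ((y j : ℤ) : ℝ) = x j) (k : Fin 3 → ZMod L) :
    ((c3 y (k 0) (k 1) (k 2) : ℤ) : ℝ) = (L : ℝ) * autocorr k x := by
  have hL : (L : ℝ) ≠ 0 := Nat.cast_ne_zero.mpr (NeZero.ne L)
  unfold autocorr c3
  rw [← mul_assoc, mul_one_div, div_self hL, one_mul]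
  push_cast
  refine Finset.sum_congr rfl fun s _ => ?_
  rw [Fin.prod_univ_three, hxy, hxy, hxy]

lemma c2_cast {L : ℕ} [NeZero L] (y : ZMod L → ℤ) (x : ZMod L → ℝ)
    (hxy : ∀ j, ((y j : ℤ) : ℝ) = x j) (k : Fin 2 → ZMod L) :
    ((c2 y (k 0) (k 1) : ℤ) : ℝ) = (L : ℝ) * autocorr k x := by
  have hL : (L : ℝ) ≠ 0 := Nat.cast_ne_zero.mpr (NeZero.ne L)
  unfold autocorr c2
  rw [← mul_assoc, mul_one_div, div_self hL, one_mul]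
  push_cast
  refine Finset.sum_congr rfl fun s _ => ?_
  rw [Fin.prod_univ_two, hxy, hxy]

theorem B3_multiple_of_six_div_L {L : ℕ} [NeZero L] (x₁ x₂ : ZMod L → ℝ)
    (hx₁ : ∀ j, x₁ j = 0 ∨ x₁ j = 1) (hx₂ : ∀ j, x₂ j = 0 ∨ x₂ j = 1)
    (hdiff : ∃ k : Fin 3 → ZMod L, autocorr k x₁ ≠ autocorr k x₂)
    (hlow : ∀ d : ℕ, d = 1 ∨ d = 2 → ∀ k : Fin d → ZMod L,
      autocorr k x₁ = autocorr k x₂) :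
    ∃ n : ℕ, 0 < n ∧
      ∑ k : Fin 3 → ZMod L, (autocorr k x₁ - autocorr k x₂) ^ 2
        = 6 * (n : ℝ) / (L : ℝ) := by
  classical
  obtain ⟨k₀, hk₀⟩ := hdiff
  have hL : (L : ℝ) ≠ 0 := Nat.cast_ne_zero.mpr (NeZero.ne L)
  have hLpos : 0 < L := Nat.pos_of_ne_zero (NeZero.ne L)
  set y₁ : ZMod L → ℤ := fun j => if x₁ j = 1 then 1 else 0 with hy₁def
  set y₂ : ZMod L → ℤ := fun j => if x₂ j = 1 then 1 else 0 with hy₂def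
  have hxy₁ : ∀ j, ((y₁ j : ℤ) : ℝ) = x₁ j := by
    intro j; rcases hx₁ j with h | h <;> simp [hy₁def, h]
  have hxy₂ : ∀ j, ((y₂ j : ℤ) : ℝ) = x₂ j := by
    intro j; rcases hx₂ j with h | h <;> simp [hy₂def, h]
  have hy₁ : ∀ j, y₁ j * y₁ j = y₁ j := by
    intro j; by_cases h : x₁ j = 1 <;> simp [hy₁def, h]
  have hy₂ : ∀ j, y₂ j * y₂ j = y₂ j := by
    intro j; by_cases h : x₂ j = 1 <;> simp [hy₂def, h]
  -- order-2 autocorrelations agree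
  have hc2 : ∀ u v : ZMod L, c2 y₁ u v = c2 y₂ u v := by
    intro u v
    have h := hlow 2 (Or.inr rfl) ![u, v]
    have h1 := c2_cast y₁ x₁ hxy₁ ![u, v]
    have h2 := c2_cast y₂ x₂ hxy₂ ![u, v]
    simp only [Matrix.cons_val_zero, Matrix.cons_val_one, Matrix.head_cons] at h1 h2
    have : ((c2 y₁ u v : ℤ) : ℝ) = ((c2 y₂ u v : ℤ) : ℝ) := by rw [h1, h2, h]
    exact_mod_cast this
  -- the integer difference function on gap pairs
  set a3 : ZMod L → ZMod L → ℤ := fun d₁ d₂ => c3 y₁ 0 d₁ d₂ - c3 y₂ 0 d₁ d₂ with ha3def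
  have ha3zero : ∀ d₁ d₂ : ZMod L, (d₁ = 0 ∨ d₂ = 0 ∨ d₁ = d₂) → a3 d₁ d₂ = 0 := by
    intro d₁ d₂ h
    rcases h with rfl | rfl | rfl
    · simp only [ha3def]
      rw [c3_idem y₁ hy₁, c3_idem y₂ hy₂, hc2, sub_self]
    · simp only [ha3def]
      rw [c3_swap23 y₁, c3_swap23 y₂, c3_idem y₁ hy₁, c3_idem y₂ hy₂, hc2, sub_self]
    · simp only [ha3def]
      rw [c3_cycle y₁, c3_cycle y₁, c3_cycle y₂, c3_cycle y₂,
        c3_idem y₁ hy₁, c3_idem y₂ hy₂, hc2, sub_self]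
  have ha3sym : ∀ d₁ d₂ : ZMod L, a3 d₂ d₁ = a3 d₁ d₂ := by
    intro d₁ d₂
    simp only [ha3def]
    rw [c3_swap23 y₁ 0 d₂ d₁, c3_swap23 y₂ 0 d₂ d₁]
  have ha3rho : ∀ d₁ d₂ : ZMod L, a3 (d₂ - d₁) (-d₁) = a3 d₁ d₂ := by
    intro d₁ d₂
    have key : ∀ y : ZMod L → ℤ, c3 y 0 (d₂ - d₁) (-d₁) = c3 y 0 d₁ d₂ := by
      intro y
      have h := c3_shift y 0 (d₂ - d₁) (-d₁) d₁
      rw [zero_add] at h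
      have e1 : d₂ - d₁ + d₁ = d₂ := by ring
      have e2 : -d₁ + d₁ = 0 := by ring
      rw [e1, e2] at h
      rw [← h, c3_cycle]
    simp only [ha3def, key]
  -- bridge for order 3
  have hbridge : ∀ k : Fin 3 → ZMod L, autocorr k x₁ - autocorr k x₂ =
      ((c3 y₁ (k 0) (k 1) (k 2) - c3 y₂ (k 0) (k 1) (k 2) : ℤ) : ℝ) / (L : ℝ) := by
    intro k
    rw [eq_div_iff hL]
    push_cast
    rw [c3_cast y₁ x₁ hxy₁ k, c3_cast y₂ x₂ hxy₂ k]
    ring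
  -- reindexing: sum over triples = L * sum over gap pairs
  set A : (Fin 3 → ZMod L) → ℤ :=
    fun k => c3 y₁ (k 0) (k 1) (k 2) - c3 y₂ (k 0) (k 1) (k 2) with hAdef
  set E : (ZMod L × ZMod L × ZMod L) ≃ (Fin 3 → ZMod L) :=
    { toFun := fun p => ![p.1, p.1 + p.2.1, p.1 + p.2.2]
      invFun := fun k => (k 0, k 1 - k 0, k 2 - k 0)
      left_inv := by
        intro p
        refine Prod.ext ?_ (Prod.ext ?_ ?_) <;>
          simp [Matrix.cons_val_zero, Matrix.cons_val_one, Matrix.head_cons]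
      right_inv := by
        intro k
        funext i
        fin_cases i <;>
          simp [Matrix.cons_val_zero, Matrix.cons_val_one, Matrix.head_cons] } with hEdef
  have hreindex : ∑ k : Fin 3 → ZMod L, (A k) ^ 2 =
      (L : ℤ) * ∑ d : ZMod L × ZMod L, (a3 d.1 d.2) ^ 2 := by
    rw [← Equiv.sum_comp E (fun k => (A k) ^ 2)]
    have hterm : ∀ p : ZMod L × ZMod L × ZMod L, A (E p) = a3 p.2.1 p.2.2 := by
      intro p
      have e0 : E p 0 = p.1 := rfl
      have e1 : E p 1 = p.1 + p.2.1 := rfl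
      have e2 : E p 2 = p.1 + p.2.2 := rfl
      simp only [hAdef, e0, e1, e2, ha3def, c3_shift']
    calc ∑ p : ZMod L × ZMod L × ZMod L, (A (E p)) ^ 2
        = ∑ p : ZMod L × ZMod L × ZMod L, (a3 p.2.1 p.2.2) ^ 2 := by
          exact Finset.sum_congr rfl fun p _ => by rw [hterm]
      _ = ∑ t : ZMod L, ∑ d : ZMod L × ZMod L, (a3 d.1 d.2) ^ 2 := by
          rw [Fintype.sum_prod_type]
      _ = (L : ℤ) * ∑ d : ZMod L × ZMod L, (a3 d.1 d.2) ^ 2 := by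
          rw [Finset.sum_const, Finset.card_univ, ZMod.card, nsmul_eq_mul]
  -- restrict to distinct gap pairs
  set D : Finset (ZMod L × ZMod L) :=
    Finset.univ.filter (fun d => d.1 ≠ 0 ∧ d.2 ≠ 0 ∧ d.1 ≠ d.2) with hDdef
  have hDsum : ∑ d : ZMod L × ZMod L, (a3 d.1 d.2) ^ 2 = ∑ d ∈ D, (a3 d.1 d.2) ^ 2 := by
    rw [hDdef]
    refine (Finset.sum_filter_of_ne ?_).symm
    intro d _ hne
    by_contra hcon
    apply hne
    have hz : d.1 = 0 ∨ d.2 = 0 ∨ d.1 = d.2 := by tauto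
    rw [ha3zero _ _ hz]
    ring
  -- divisibility by 2
  have h2dvd : (2:ℤ) ∣ ∑ d ∈ D, (a3 d.1 d.2) ^ 2 := by
    apply two_dvd_sum_orbits (fun d : ZMod L × ZMod L => (a3 d.1 d.2) ^ 2) Prod.swap D
    · intro d hd
      simp only [hDdef, Finset.mem_filter, Finset.mem_univ, true_and] at hd ⊢
      exact ⟨hd.2.1, hd.1, fun h => hd.2.2 h.symm⟩
    · intro d _; exact Prod.swap_swap d
    · intro d hd h
      simp only [hDdef, Finset.mem_filter, Finset.mem_univ, true_and] at hd
      exact hd.2.2 (by simpa using (congrArg Prod.fst h).symm)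
    · intro d _
      show (a3 (Prod.swap d).1 (Prod.swap d).2) ^ 2 = (a3 d.1 d.2) ^ 2
      rw [Prod.fst_swap, Prod.snd_swap, ha3sym]
  -- divisibility by 3
  set ρ : ZMod L × ZMod L → ZMod L × ZMod L := fun d => (d.2 - d.1, -d.1) with hρdef
  have hρ3 : ∀ d, ρ (ρ (ρ d)) = d := by
    rintro ⟨a, b⟩
    simp only [hρdef, Prod.mk.injEq]
    constructor <;> ring
  have hρinj : Function.Injective ρ := by
    intro b c h
    have := congrArg (fun z => ρ (ρ z)) h
    simpa only [hρ3] using this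
  have h3dvd : (3:ℤ) ∣ ∑ d ∈ D, (a3 d.1 d.2) ^ 2 := by
    rw [← Finset.sum_filter_add_sum_filter_not D (fun d => ρ d ≠ d)]
    apply dvd_add
    · apply three_dvd_sum_orbits (fun d : ZMod L × ZMod L => (a3 d.1 d.2) ^ 2) ρ
      · intro d hd
        simp only [hDdef, Finset.mem_filter, Finset.mem_univ, true_and] at hd ⊢
        obtain ⟨⟨h1, h2, h12⟩, hfix⟩ := hd
        refine ⟨⟨sub_ne_zero.2 (Ne.symm h12), neg_ne_zero.2 h1, ?_⟩, ?_⟩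
        · show (ρ d).1 ≠ (ρ d).2
          simp only [hρdef]
          intro h
          apply h2
          have : d.2 = -d.1 + d.1 := by rw [← h]; ring
          rw [this]; ring
        · intro h
          exact hfix (hρinj h)
      · intro d _; exact hρ3 d
      · intro d hd
        exact (Finset.mem_filter.1 hd).2
      · intro d _
        show (a3 (ρ d).1 (ρ d).2) ^ 2 = (a3 d.1 d.2) ^ 2
        simp only [hρdef]
        rw [ha3rho]
    · apply Finset.dvd_sum
      intro d hd
      simp only [hDdef, Finset.mem_filter, Finset.mem_univ, true_and, not_not] at hd
      obtain ⟨⟨h1, h2, h12⟩, hfix⟩ := hd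
      have hf1 : d.2 - d.1 = d.1 := congrArg Prod.fst hfix
      have hf2 : -d.1 = d.2 := congrArg Prod.snd hfix
      have hd2 : d.2 = d.1 + d.1 := by linear_combination hf1
      have h3z : d.1 + d.1 + d.1 = 0 := by linear_combination -hf1 - hf2
      have hdvd : (3:ℤ) ∣ a3 d.1 d.2 := by
        rw [ha3def]
        simp only []
        rw [hd2]
        exact dvd_sub (c3_dvd y₁ d.1 h1 h3z) (c3_dvd y₂ d.1 h1 h3z)
      exact dvd_pow hdvd two_ne_zero
  have h6 : (6:ℤ) ∣ ∑ d ∈ D, (a3 d.1 d.2) ^ 2 := by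
    obtain ⟨p, hp⟩ := h2dvd
    obtain ⟨q, hq⟩ := h3dvd
    omega
  obtain ⟨m, hm⟩ := h6
  have hS6 : ∑ k : Fin 3 → ZMod L, (A k) ^ 2 = (L : ℤ) * (6 * m) := by
    rw [hreindex, hDsum, hm]
  -- positivity
  have hbA : ∀ k : Fin 3 → ZMod L,
      autocorr k x₁ - autocorr k x₂ = ((A k : ℤ) : ℝ) / (L : ℝ) := fun k => hbridge k
  have hA0 : A k₀ ≠ 0 := by
    intro h
    apply hk₀
    have hb := hbA k₀
    rw [h] at hb
    simp only [Int.cast_zero, zero_div] at hb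
    exact sub_eq_zero.1 hb
  have hSpos : 0 < ∑ k : Fin 3 → ZMod L, (A k) ^ 2 := by
    have h1 : 0 < (A k₀) ^ 2 := pow_two_pos_of_ne_zero hA0
    have h2 : (A k₀) ^ 2 ≤ ∑ k : Fin 3 → ZMod L, (A k) ^ 2 :=
      Finset.single_le_sum (fun k _ => sq_nonneg (A k)) (Finset.mem_univ k₀)
    linarith
  have hLZ : (0:ℤ) < (L:ℤ) := by exact_mod_cast hLpos
  have hmpos : 0 < m := by nlinarith [hS6 ▸ hSpos]
  refine ⟨m.toNat, by omega, ?_⟩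
  have hmn : ((m.toNat : ℕ) : ℝ) = (m : ℝ) := by
    exact_mod_cast congrArg (fun z : ℤ => (z : ℝ)) (Int.toNat_of_nonneg hmpos.le)
  calc ∑ k : Fin 3 → ZMod L, (autocorr k x₁ - autocorr k x₂) ^ 2
      = ∑ k : Fin 3 → ZMod L, ((A k : ℤ) : ℝ) ^ 2 / ((L : ℝ)) ^ 2 := by
        refine Finset.sum_congr rfl fun k _ => ?_
        rw [hbA k, div_pow]
    _ = ((∑ k : Fin 3 → ZMod L, (A k) ^ 2 : ℤ) : ℝ) / ((L : ℝ)) ^ 2 := by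
        rw [← Finset.sum_div]
        congr 1
        push_cast
        rfl
    _ = (((L : ℤ) * (6 * m) : ℤ) : ℝ) / ((L : ℝ)) ^ 2 := by rw [hS6]
    _ = 6 * ((m.toNat : ℕ) : ℝ) / (L : ℝ) := by
        rw [hmn]
        push_cast
        field_simp
end
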